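/- arXiv:2309.02815 — 2 statements merged into one kernel-verified Lean document; each statement's English description precedes it below -/
import Mathlib

section
/- Let $P$ be a symmetric positive definite $d\times d$ real matrix and $\bar A$ a $d\times d$ real matrix satisfying the Lyapunov equation $\bar A^\top P + P\bar A = -I_d$. Then for any $\varepsilon$ with $0 < \varepsilon \le 1/(2\lambda_{\max}(P))$ and any $z\in\mathbb{R}^d$, one has $z^\top(P + \varepsilon \bar A^\top P + \varepsilon P\bar A + \varepsilon^2 P)z \le (1 - \varepsilon/(2\lambda_{\max}(P)))\, z^\top P z$. -/
/-!
Expanding the quadratic form and using the Lyapunov equation turns the left-hand side into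
`(1 + ε²) zᵀPz - ε ‖z‖²`. Since `zᵀPz ≤ λ_max ‖z‖²`, the term `-ε ‖z‖²` is at most
`-(ε / λ_max) zᵀPz`, and the condition `ε ≤ 1 / (2 λ_max)` makes `ε² zᵀPz` absorb only half of it.
-/

open Matrix

open scoped MatrixOrder ComplexOrder in
theorem Matrix.IsHermitian.dotProduct_mulVec_le {𝕜 n : Type*} [RCLike 𝕜] [Fintype n]
    [DecidableEq n] {A : Matrix n n 𝕜} (hA : A.IsHermitian) {r : ℝ}
    (hr : ∀ i, hA.eigenvalues i ≤ r) (x : n → 𝕜) :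
    star x ⬝ᵥ (A *ᵥ x) ≤ (r : 𝕜) * (star x ⬝ᵥ x) := by
  have hle : A ≤ algebraMap ℝ (Matrix n n 𝕜) r := by
    refine le_algebraMap_of_spectrum_le (fun t ht => ?_) hA.isSelfAdjoint
    obtain ⟨i, rfl⟩ := hA.spectrum_real_eq_range_eigenvalues ▸ ht
    exact hr i
  have h := (le_iff.mp hle).dotProduct_mulVec_nonneg x
  rwa [Algebra.algebraMap_eq_smul_one, sub_mulVec, smul_mulVec, one_mulVec, dotProduct_sub,
    dotProduct_smul, RCLike.real_smul_eq_coe_mul, sub_nonneg] at h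

theorem Matrix.dotProduct_mulVec_perturb_of_lyapunov {R n : Type*} [CommRing R] [Fintype n]
    [DecidableEq n] {P A : Matrix n n R} (hLyap : Aᵀ * P + P * A = -1) (ε : R) (z : n → R) :
    z ⬝ᵥ ((P + ε • (Aᵀ * P) + ε • (P * A) + ε ^ 2 • P) *ᵥ z)
      = (1 + ε ^ 2) * (z ⬝ᵥ (P *ᵥ z)) - ε * (z ⬝ᵥ z) := by
  have hsplit : P + ε • (Aᵀ * P) + ε • (P * A) + ε ^ 2 • P
      = (1 + ε ^ 2) • P + ε • (Aᵀ * P + P * A) := by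
    module
  rw [hsplit, hLyap, add_mulVec, smul_mulVec, smul_mulVec, neg_mulVec, one_mulVec,
    dotProduct_add, dotProduct_smul, dotProduct_smul, dotProduct_neg, smul_eq_mul, smul_eq_mul]
  ring

theorem lyapunov_contraction_general {d : ℕ}
    (P A : Matrix (Fin d) (Fin d) ℝ) (hP : P.PosDef)
    (hLyap : Aᵀ * P + P * A = -(1 : Matrix (Fin d) (Fin d) ℝ))
    (lam : ℝ) (hlam : lam = ⨆ i, hP.1.eigenvalues i)
    (ε : ℝ) (hε0 : 0 < ε) (hε : ε ≤ 1 / (2 * lam)) (z : Fin d → ℝ) :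
    z ⬝ᵥ ((P + ε • (Aᵀ * P) + ε • (P * A) + (ε ^ 2) • P) *ᵥ z)
      ≤ (1 - ε / (2 * lam)) * (z ⬝ᵥ (P *ᵥ z)) := by
  have hle : ∀ i, hP.1.eigenvalues i ≤ lam :=
    fun i => hlam ▸ le_ciSup (Set.finite_range _).bddAbove i
  have hlam_pos : 0 < lam := by
    have := one_div_pos.mp (hε0.trans_le hε)
    linarith
  have hray : z ⬝ᵥ (P *ᵥ z) ≤ lam * (z ⬝ᵥ z) := by
    simpa using hP.1.dotProduct_mulVec_le hle z
  have hq : 0 ≤ z ⬝ᵥ (P *ᵥ z) := by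
    simpa using hP.posSemidef.dotProduct_mulVec_nonneg z
  have hε_half : ε ≤ 1 / lam - 1 / (2 * lam) := by
    field_simp at hε ⊢
    linarith
  rw [dotProduct_mulVec_perturb_of_lyapunov hLyap]
  calc (1 + ε ^ 2) * (z ⬝ᵥ (P *ᵥ z)) - ε * (z ⬝ᵥ z)
      ≤ (1 + ε ^ 2) * (z ⬝ᵥ (P *ᵥ z)) - ε * (z ⬝ᵥ (P *ᵥ z) / lam) := by
        gcongr
        rwa [div_le_iff₀' hlam_pos]
    _ = z ⬝ᵥ (P *ᵥ z) - ε * (1 / lam - ε) * (z ⬝ᵥ (P *ᵥ z)) := by ring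
    _ ≤ z ⬝ᵥ (P *ᵥ z) - ε * (1 / (2 * lam)) * (z ⬝ᵥ (P *ᵥ z)) := by gcongr; linarith
    _ = (1 - ε / (2 * lam)) * (z ⬝ᵥ (P *ᵥ z)) := by ring

theorem lyapunov_contraction {d : ℕ} (hd : 0 < d)
    (P A : Matrix (Fin d) (Fin d) ℝ) (hP : P.PosDef)
    (hLyap : Aᵀ * P + P * A = -(1 : Matrix (Fin d) (Fin d) ℝ))
    (lam : ℝ) (hlam : lam = ⨆ i, hP.1.eigenvalues i)
    (ε : ℝ) (hε0 : 0 < ε) (hε : ε ≤ 1 / (2 * lam)) (z : Fin d → ℝ) :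
    z ⬝ᵥ ((P + ε • (Aᵀ * P) + ε • (P * A) + (ε ^ 2) • P) *ᵥ z)
      ≤ (1 - ε / (2 * lam)) * (z ⬝ᵥ (P *ᵥ z)) :=
  lyapunov_contraction_general P A hP hLyap lam hlam ε hε0 hε z
end

section
/- Let $(x_i)_{i=1}^n$ be nonnegative reals, and suppose for some fixed $\epsilon > 0$, $\zeta \ge 0$, $\chi \ge 0$ we have, for all $u \ge \epsilon$, $\sum_{i=1}^n \mathbf{1}\{x_i > u\} \le \zeta/u^2 + \chi$. Then, choosing $\epsilon = \sqrt{\zeta/n}$ (assuming $\zeta > 0$), $\sum_{i=1}^n x_i \le 2\sqrt{n\zeta} + \chi \max_{i\le n} x_i$. -/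
/-! Each excess `(x i - ε)⁺` is the length of `{u ∈ (ε, max M ε] | u < x i}`, so the total
excess is the integral of the counting function `u ↦ #{i | x i > u}` over `[ε, max M ε]`.
Bounding the count by `ζ / u ^ 2 + χ` gives at most `ζ / ε + χ M`, hence
`∑ x i ≤ n ε + ζ / ε + χ M`, and `ε = √(ζ / n)` balances the first two terms at `√(n ζ)`. -/

open Finset MeasureTheory intervalIntegral

lemma antitone_ite_lt (c : ℝ) : Antitone fun u : ℝ => if u < c then (1 : ℝ) else 0 := by
  intro u v huv
  dsimp only
  split_ifs <;> grind

lemma integral_ite_lt_eq_posPart_sub {a b c : ℝ} (hab : a ≤ b) (hcb : c ≤ b) :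
    ∫ u in a..b, (if u < c then (1 : ℝ) else 0) = (c - a)⁺ := by
  have hind : (fun u : ℝ => if u < c then (1 : ℝ) else 0) = (Set.Iio c).indicator 1 := by
    ext u
    simp [Set.indicator_apply]
  have hset : Set.Iio c ∩ Set.Ioc a b = Set.Ioo a c := by
    ext u
    simp only [Set.mem_inter_iff, Set.mem_Ioc, Set.mem_Iio, Set.mem_Ioo]
    exact ⟨fun ⟨huc, hau, _⟩ => ⟨hau, huc⟩, fun ⟨hau, huc⟩ => ⟨huc, hau, huc.le.trans hcb⟩⟩
  rw [hind, integral_of_le hab, MeasureTheory.integral_indicator measurableSet_Iio,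
    Measure.restrict_restrict measurableSet_Iio, hset]
  simp [Real.volume_real_Ioo, posPart_def]

lemma intervalIntegrable_div_sq {a b : ℝ} (ζ : ℝ) (ha : 0 < a) (hab : a ≤ b) :
    IntervalIntegrable (fun u => ζ / u ^ 2) volume a b := by
  refine (continuousOn_const.div (continuousOn_pow 2) fun u hu => ?_).intervalIntegrable
  rw [Set.uIcc_of_le hab] at hu
  exact pow_ne_zero 2 (ha.trans_le hu.1).ne'

lemma integral_div_sq {a b : ℝ} (ζ : ℝ) (ha : 0 < a) (hab : a ≤ b) :
    ∫ u in a..b, ζ / u ^ 2 = ζ / a - ζ / b := by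
  have hderiv : ∀ u ∈ Set.uIcc a b, HasDerivAt (fun u => -ζ * u⁻¹) (ζ / u ^ 2) u := by
    intro u hu
    rw [Set.uIcc_of_le hab] at hu
    exact ((hasDerivAt_inv (ha.trans_le hu.1).ne').const_mul (-ζ)).congr_deriv (by ring)
  rw [integral_eq_sub_of_hasDerivAt hderiv (intervalIntegrable_div_sq ζ ha hab)]
  ring

section LayerCake

variable {ι : Type*} (s : Finset ι) (x : ι → ℝ)

lemma sum_le_card_mul_add_sum_posPart_sub (a : ℝ) :
    ∑ i ∈ s, x i ≤ #s * a + ∑ i ∈ s, (x i - a)⁺ :=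
  calc ∑ i ∈ s, x i ≤ ∑ i ∈ s, (a + (x i - a)⁺) :=
        sum_le_sum fun i _ => by linarith [le_posPart (x i - a)]
    _ = #s * a + ∑ i ∈ s, (x i - a)⁺ := by rw [sum_add_distrib, sum_const, nsmul_eq_mul]

lemma sum_posPart_sub_eq_integral_count {a b : ℝ} (hab : a ≤ b) (hxb : ∀ i ∈ s, x i ≤ b) :
    ∑ i ∈ s, (x i - a)⁺ = ∫ u in a..b, ∑ i ∈ s, if u < x i then (1 : ℝ) else 0 := by
  rw [integral_finsetSum fun i _ => (antitone_ite_lt (x i)).intervalIntegrable]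
  exact sum_congr rfl fun i hi => (integral_ite_lt_eq_posPart_sub hab (hxb i hi)).symm

lemma sum_posPart_sub_le_of_count_le {a b ζ χ : ℝ} (ha : 0 < a) (hab : a ≤ b)
    (hxb : ∀ i ∈ s, x i ≤ b)
    (hcount : ∀ u, a ≤ u → (∑ i ∈ s, if u < x i then (1 : ℝ) else 0) ≤ ζ / u ^ 2 + χ) :
    ∑ i ∈ s, (x i - a)⁺ ≤ ζ / a - ζ / b + χ * (b - a) := by
  have hbound_int : IntervalIntegrable (fun u => ζ / u ^ 2 + χ) volume a b :=
    (intervalIntegrable_div_sq ζ ha hab).add intervalIntegrable_const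
  have hcount_int : IntervalIntegrable
      (fun u => ∑ i ∈ s, if u < x i then (1 : ℝ) else 0) volume a b := by
    rw [← Finset.sum_fn]
    exact IntervalIntegrable.sum s fun i _ => (antitone_ite_lt (x i)).intervalIntegrable
  calc ∑ i ∈ s, (x i - a)⁺
      = ∫ u in a..b, ∑ i ∈ s, if u < x i then (1 : ℝ) else 0 :=
        sum_posPart_sub_eq_integral_count s x hab hxb
    _ ≤ ∫ u in a..b, (ζ / u ^ 2 + χ) :=
        integral_mono_on hab hcount_int hbound_int fun u hu => hcount u hu.1
    _ = ζ / a - ζ / b + χ * (b - a) := by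
        rw [integral_add (intervalIntegrable_div_sq ζ ha hab) intervalIntegrable_const,
          integral_div_sq ζ ha hab, intervalIntegral.integral_const, smul_eq_mul, mul_comm]

lemma sum_le_of_count_le (hs : s.Nonempty) (hx : ∀ i ∈ s, 0 ≤ x i) {ε ζ χ : ℝ} (hε : 0 < ε)
    (hζ : 0 ≤ ζ) (hχ : 0 ≤ χ)
    (hcount : ∀ u, ε ≤ u → (∑ i ∈ s, if u < x i then (1 : ℝ) else 0) ≤ ζ / u ^ 2 + χ) :
    ∑ i ∈ s, x i ≤ #s * ε + ζ / ε + χ * s.sup' hs x := by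
  set M := s.sup' hs x
  have hM : 0 ≤ M := (hx _ hs.choose_spec).trans (le_sup' x hs.choose_spec)
  have hexcess := sum_posPart_sub_le_of_count_le s x hε (le_max_right M ε)
    (fun i hi => (le_sup' x hi).trans (le_max_left M ε)) hcount
  have hζb : 0 ≤ ζ / max M ε := div_nonneg hζ (hε.le.trans (le_max_right M ε))
  have hχb : χ * (max M ε - ε) ≤ χ * M :=
    mul_le_mul_of_nonneg_left (sub_le_iff_le_add.2 (max_le (by linarith) (by linarith))) hχ
  linarith [sum_le_card_mul_add_sum_posPart_sub s x ε]

end LayerCake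

lemma mul_sqrt_div_eq_sqrt_mul {n : ℝ} (ζ : ℝ) (hn : 0 < n) : n * √(ζ / n) = √(n * ζ) := by
  rw [show n * ζ = n ^ 2 * (ζ / n) by field_simp, Real.sqrt_mul (sq_nonneg n),
    Real.sqrt_sq hn.le]

lemma div_sqrt_div_eq_sqrt_mul {n ζ : ℝ} (hn : 0 < n) (hζ : 0 < ζ) :
    ζ / √(ζ / n) = √(n * ζ) := by
  have hq : 0 < ζ / n := div_pos hζ hn
  rw [div_eq_iff (Real.sqrt_pos.2 hq).ne', ← mul_sqrt_div_eq_sqrt_mul ζ hn, mul_assoc,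
    Real.mul_self_sqrt hq.le, mul_div_cancel₀ ζ hn.ne']

theorem first_order_width_bound (n : ℕ) (hn : 1 ≤ n) (x : ℕ → ℝ) (hx : ∀ i, 0 ≤ x i)
    (ζ χ : ℝ) (hζ : 0 < ζ) (hχ : 0 ≤ χ)
    (hcount : ∀ u : ℝ, Real.sqrt (ζ / n) ≤ u →
      (∑ i ∈ Finset.Icc 1 n, if u < x i then (1:ℝ) else 0) ≤ ζ / u ^ 2 + χ) :
    (∑ i ∈ Finset.Icc 1 n, x i)
      ≤ 2 * Real.sqrt (n * ζ) + χ * (Finset.Icc 1 n).sup' (by simp [hn]) x := by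
  have hn0 : (0 : ℝ) < n := by exact_mod_cast hn
  have hε : 0 < √(ζ / n) := Real.sqrt_pos.2 (div_pos hζ hn0)
  have h := sum_le_of_count_le (Finset.Icc 1 n) x (by simp [hn]) (fun i _ => hx i) hε hζ.le hχ
    hcount
  rwa [Nat.card_Icc, Nat.add_sub_cancel, mul_sqrt_div_eq_sqrt_mul ζ hn0,
    div_sqrt_div_eq_sqrt_mul hn0 hζ, ← two_mul] at h
end
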